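/- arXiv:1910.00206 — 4 statements merged into one kernel-verified Lean document; each statement's English description precedes it below -/
import Mathlib

section
/- Let p, q, r be integers with gcd(q, r) = 1. The cyclic sequence v_1 = (1,0), v_2 = (0,1), v_3 = (−1,p), v_4 = (q,r) forms complete fan data of length 4 that is LDP fan data with exactly two singular cones if and only if p ≤ 1 and r ≤ min{−pq−2, −2, −q−1, q−pq−1}. -/
/-- The determinant `det(u, w) = u₁w₂ − u₂w₁` of two integer vectors. -/
def detZ (u w : ℤ × ℤ) : ℤ := u.1 * w.2 - u.2 * w.1

/-- The real vector associated to an integer vector. -/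
noncomputable def toR2 (u : ℤ × ℤ) : ℝ × ℝ := ((u.1 : ℝ), (u.2 : ℝ))

/-- The cone `ℝ_{≥0} u + ℝ_{≥0} w` spanned by two integer vectors. -/
def coneOf (u w : ℤ × ℤ) : Set (ℝ × ℝ) :=
  {x | ∃ a b : ℝ, 0 ≤ a ∧ 0 ≤ b ∧ x = a • toR2 u + b • toR2 w}

/-- Complete fan data of length `d`: a cyclic sequence of primitive integer vectors with
`det(v_i, v_{i+1}) ≥ 1` whose successive cones cover `ℝ²` and have pairwise disjoint
interiors. -/
def IsCompleteFanData (d : ℕ) (v : ZMod d → ℤ × ℤ) : Prop :=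
  3 ≤ d ∧
  (∀ i, Int.gcd (v i).1 (v i).2 = 1) ∧
  (∀ i, 1 ≤ detZ (v i) (v (i + 1))) ∧
  (⋃ i, coneOf (v i) (v (i + 1))) = Set.univ ∧
  ∀ i j, i ≠ j →
    interior (coneOf (v i) (v (i + 1))) ∩ interior (coneOf (v j) (v (j + 1))) = ∅

/-- `f(i) = det(v_{i−1}, v_i) + det(v_i, v_{i+1}) + det(v_{i+1}, v_{i−1})`. -/
def fanF (d : ℕ) (v : ZMod d → ℤ × ℤ) (i : ZMod d) : ℤ :=
  detZ (v (i - 1)) (v i) + detZ (v i) (v (i + 1)) + detZ (v (i + 1)) (v (i - 1))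

/-- LDP fan data: complete fan data with `f(i) ≥ 1` for all `i`. -/
def IsLDPFanData (d : ℕ) (v : ZMod d → ℤ × ℤ) : Prop :=
  IsCompleteFanData d v ∧ ∀ i, 1 ≤ fanF d v i

/-- The number of singular cones, i.e. indices `i` with `det(v_i, v_{i+1}) ≥ 2`. -/
noncomputable def numSingular (d : ℕ) (v : ZMod d → ℤ × ℤ) : ℕ :=
  {i : ZMod d | 2 ≤ detZ (v i) (v (i + 1))}.ncard

/-- Equivalence of fan data: some `GL(2, ℤ)` matrix maps the vector set of one
bijectively onto the vector set of the other. -/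
def FanEquiv {d₁ d₂ : ℕ} (v : ZMod d₁ → ℤ × ℤ) (w : ZMod d₂ → ℤ × ℤ) : Prop :=
  ∃ M : Matrix (Fin 2) (Fin 2) ℤ, IsUnit M.det ∧
    (fun u : ℤ × ℤ => (M 0 0 * u.1 + M 0 1 * u.2, M 1 0 * u.1 + M 1 1 * u.2)) ''
      Set.range v = Set.range w

/-- The cyclic sequence of length `d − 1` obtained by deleting the vector `v_k`:
it lists `v_{k+1}, v_{k+2}, …, v_{k+d−1}`. -/
def deleteAt {d : ℕ} (v : ZMod d → ℤ × ℤ) (k : ZMod d) : ZMod (d - 1) → ℤ × ℤ :=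
  fun i => v (k + 1 + (i.val : ZMod d))

/-- The cyclic sequence of length `d + 1` obtained by inserting `v_k + v_{k+1}`
between `v_k` and `v_{k+1}`. -/
def insertAt {d : ℕ} (v : ZMod d → ℤ × ℤ) (k : ZMod d) : ZMod (d + 1) → ℤ × ℤ :=
  fun i =>
    if i.val ≤ k.val then v ((i.val : ℕ) : ZMod d)
    else if i.val = k.val + 1 then v k + v (k + 1)
    else v ((i.val - 1 : ℕ) : ZMod d)

/-- The data `(1,0), (0,1), (−1,p), (q,r)`. -/
def data4 (p q r : ℤ) : ZMod 4 → ℤ × ℤ := fun i =>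
  if i = 0 then (1, 0) else if i = 1 then (0, 1) else if i = 2 then (-1, p) else (q, r)

/-! Positive consecutive determinants already make four vectors a complete fan. In the open
half-plane `det(·, x) > 0` the relation `det(a, b) > 0` is transitive, so no cycle of positive
steps fits in a half-plane: this gives the covering, and two opposite cones with a common
interior point would produce such a cycle among the `±v_i`. What remains are the conditions
`det(v_i, v_{i+1}) ≥ 2` on the last two cones and `f(i) ≥ 1`; the latter are the stated bounds
up to the two boundary cases `r = -q` and `r = q - pq`, which `gcd(q, r) = 1` excludes. -/

def det2 (x y : ℝ × ℝ) : ℝ := x.1 * y.2 - x.2 * y.1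

theorem det2_toR2 (u w : ℤ × ℤ) : det2 (toR2 u) (toR2 w) = detZ u w := by
  simp [det2, toR2, detZ]

theorem det2_swap (x y : ℝ × ℝ) : det2 y x = -det2 x y := by
  simp only [det2]; ring

@[simp]
theorem det2_neg_left (x y : ℝ × ℝ) : det2 (-x) y = -det2 x y := by
  simp only [det2, Prod.fst_neg, Prod.snd_neg]; ring

@[simp]
theorem det2_neg_right (x y : ℝ × ℝ) : det2 x (-y) = -det2 x y := by
  simp only [det2, Prod.fst_neg, Prod.snd_neg]; ring

@[simp]
theorem det2_self (x : ℝ × ℝ) : det2 x x = 0 := by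
  simp only [det2]; ring

theorem det2_smul_eq (a b x : ℝ × ℝ) : det2 a b • x = det2 x b • a + det2 a x • b := by
  ext <;> simp only [det2, Prod.fst_add, Prod.snd_add, Prod.smul_fst, Prod.smul_snd,
    smul_eq_mul] <;> ring

theorem eq_det2_div_smul_add {a b : ℝ × ℝ} (h : det2 a b ≠ 0) (x : ℝ × ℝ) :
    x = (det2 x b / det2 a b) • a + (det2 a x / det2 a b) • b := by
  rw [div_eq_inv_mul, div_eq_inv_mul, ← smul_smul, ← smul_smul, ← smul_add, ← det2_smul_eq,
    inv_smul_smul₀ h]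

theorem det2_pos_trans {a b c x : ℝ × ℝ} (ha : 0 < det2 a x) (hb : 0 < det2 b x)
    (hc : 0 < det2 c x) (hab : 0 < det2 a b) (hbc : 0 < det2 b c) : 0 < det2 a c := by
  have cramer : det2 a b * det2 c x + det2 b c * det2 a x + det2 c a * det2 b x = 0 := by
    simp only [det2]; ring
  rw [det2_swap a c] at cramer
  nlinarith [mul_pos hab hc, mul_pos hbc ha]

theorem not_forall_det2_pos_of_cycle {d : ℕ} [NeZero d] {w : ZMod d → ℝ × ℝ}
    (hw : ∀ i, 0 < det2 (w i) (w (i + 1))) (x : ℝ × ℝ) : ¬ ∀ i, 0 < det2 (w i) x := by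
  intro hx
  have chain (n : ℕ) : 0 < det2 (w 0) (w (n + 1)) := by
    induction n with
    | zero => simpa using hw 0
    | succ n ih =>
      push_cast
      exact det2_pos_trans (hx 0) (hx _) (hx _) ih (hw _)
  have hd : ((d - 1 : ℕ) : ZMod d) + 1 = 0 := by
    rw [Nat.cast_pred (Nat.pos_of_neZero d), ZMod.natCast_self, zero_sub, neg_add_cancel]
  simpa [hd] using chain (d - 1)

theorem exists_nonneg_and_succ_nonpos {d : ℕ} [NeZero d] {f : ZMod d → ℝ}
    (hpos : ∃ k, 0 ≤ f k) (hneg : ∃ j, f j ≤ 0) : ∃ i, 0 ≤ f i ∧ f (i + 1) ≤ 0 := by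
  obtain ⟨k, hk⟩ := hpos
  obtain ⟨j, hj⟩ := hneg
  by_contra! h
  have step (n : ℕ) : 0 < f (k + n + 1) := by
    induction n with
    | zero => simpa using h k hk
    | succ n ih =>
      push_cast
      rw [← add_assoc]
      exact h _ ih.le
  have := step (j - k - 1).val
  rw [ZMod.natCast_zmod_val, show k + (j - k - 1) + 1 = j by ring] at this
  linarith

theorem mem_coneOf_iff {u w : ℤ × ℤ} (h : 0 < detZ u w) {x : ℝ × ℝ} :
    x ∈ coneOf u w ↔ 0 ≤ det2 (toR2 u) x ∧ 0 ≤ det2 x (toR2 w) := by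
  have hD : (0 : ℝ) < det2 (toR2 u) (toR2 w) := by rw [det2_toR2]; exact_mod_cast h
  constructor
  · rintro ⟨a, b, ha, hb, rfl⟩
    have h₁ : det2 (toR2 u) (a • toR2 u + b • toR2 w) = b * det2 (toR2 u) (toR2 w) := by
      simp only [det2, Prod.fst_add, Prod.snd_add, Prod.smul_fst, Prod.smul_snd, smul_eq_mul]
      ring
    have h₂ : det2 (a • toR2 u + b • toR2 w) (toR2 w) = a * det2 (toR2 u) (toR2 w) := by
      simp only [det2, Prod.fst_add, Prod.snd_add, Prod.smul_fst, Prod.smul_snd, smul_eq_mul]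
      ring
    rw [h₁, h₂]
    exact ⟨by positivity, by positivity⟩
  · rintro ⟨h₁, h₂⟩
    exact ⟨_, _, by positivity, by positivity, eq_det2_div_smul_add hD.ne' x⟩

theorem interior_setOf_det2_nonneg {a : ℝ × ℝ} (ha : a ≠ 0) :
    interior {x | 0 ≤ det2 a x} = {x | 0 < det2 a x} := by
  let ℓ : ℝ × ℝ →L[ℝ] ℝ :=
    a.1 • ContinuousLinearMap.snd ℝ ℝ ℝ - a.2 • ContinuousLinearMap.fst ℝ ℝ ℝ
  have hℓ : ⇑ℓ = det2 a := funext fun x => by simp [ℓ, det2]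
  have hpos : 0 < det2 a (-a.2, a.1) := by
    have : a.1 ≠ 0 ∨ a.2 ≠ 0 := by
      by_contra! h
      exact ha (Prod.ext h.1 h.2)
    simp only [det2, mul_neg, sub_neg_eq_add]
    rcases this with h | h
    · nlinarith [mul_self_pos.mpr h, mul_self_nonneg a.2]
    · nlinarith [mul_self_pos.mpr h, mul_self_nonneg a.1]
  have hsurj : Function.Surjective ℓ := fun y =>
    ⟨(y / det2 a (-a.2, a.1)) • (-a.2, a.1), by
      rw [map_smul, hℓ, smul_eq_mul, div_mul_cancel₀ _ hpos.ne']⟩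
  have h := (ℓ.isOpenMap hsurj).preimage_interior_eq_interior_preimage ℓ.continuous (Set.Ici 0)
  rw [interior_Ici, hℓ] at h
  exact h.symm

theorem interior_coneOf_subset {u w : ℤ × ℤ} (h : 0 < detZ u w) :
    interior (coneOf u w) ⊆ {x | 0 < det2 (toR2 u) x ∧ 0 < det2 x (toR2 w)} := by
  have hD : (0 : ℝ) < det2 (toR2 u) (toR2 w) := by rw [det2_toR2]; exact_mod_cast h
  have hu : toR2 u ≠ 0 := by rintro hu; simp [hu, det2] at hD
  have hw : -toR2 w ≠ 0 := by rintro hw; simp [neg_eq_zero.mp hw, det2] at hD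
  have hcone : coneOf u w = {x | 0 ≤ det2 (toR2 u) x} ∩ {x | 0 ≤ det2 (-toR2 w) x} := by
    ext x
    simp only [mem_coneOf_iff h, Set.mem_inter_iff, Set.mem_ofPred_eq, det2_neg_left,
      det2_swap (toR2 w) x]
  rw [hcone, interior_inter, interior_setOf_det2_nonneg hu, interior_setOf_det2_nonneg hw]
  rintro x ⟨h₁, h₂⟩
  exact ⟨h₁, by simpa only [Set.mem_ofPred_eq, det2_neg_left, det2_swap (toR2 w) x] using h₂⟩

theorem iUnion_coneOf_eq_univ {d : ℕ} [NeZero d] {v : ZMod d → ℤ × ℤ}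
    (hv : ∀ i, 0 < detZ (v i) (v (i + 1))) : ⋃ i, coneOf (v i) (v (i + 1)) = Set.univ := by
  have hw (i : ZMod d) : 0 < det2 (toR2 (v i)) (toR2 (v (i + 1))) := by
    rw [det2_toR2]; exact_mod_cast hv i
  refine Set.eq_univ_of_forall fun x => Set.mem_iUnion.mpr ?_
  have hpos : ∃ k, 0 ≤ det2 (toR2 (v k)) x := by
    by_contra! h
    exact not_forall_det2_pos_of_cycle hw (-x) fun i => by simpa using h i
  have hneg : ∃ j, det2 (toR2 (v j)) x ≤ 0 := by
    by_contra! h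
    exact not_forall_det2_pos_of_cycle hw x h
  obtain ⟨i, hi, hi'⟩ := exists_nonneg_and_succ_nonpos hpos hneg
  exact ⟨i, (mem_coneOf_iff (hv i)).mpr ⟨hi, by rw [det2_swap]; linarith⟩⟩

theorem interior_coneOf_inter_eq_empty_four {v : ZMod 4 → ℤ × ℤ}
    (hv : ∀ i, 0 < detZ (v i) (v (i + 1))) {i j : ZMod 4} (hij : i ≠ j) :
    interior (coneOf (v i) (v (i + 1))) ∩ interior (coneOf (v j) (v (j + 1))) = ∅ := by
  refine Set.eq_empty_of_forall_notMem fun x ⟨hxi, hxj⟩ => ?_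
  obtain ⟨hi, hi'⟩ := interior_coneOf_subset (hv i) hxi
  obtain ⟨hj, hj'⟩ := interior_coneOf_subset (hv j) hxj
  rw [det2_swap] at hi' hj'
  have hw (k : ZMod 4) : 0 < det2 (toR2 (v k)) (toR2 (v (k + 1))) := by
    rw [det2_toR2]; exact_mod_cast hv k
  set w : ZMod 4 → ℝ × ℝ := fun k => toR2 (v k)
  have hi3 : i + 3 + 1 = i := by rw [add_assoc, show (3 + 1 : ZMod 4) = 0 by decide, add_zero]
  have hcases : ∀ i j : ZMod 4, i ≠ j → j = i + 1 ∨ j = i + 2 ∨ j = i + 3 := by decide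
  obtain rfl | rfl | rfl := hcases i j hij
  · linarith
  · -- `-w (i+3), w (i+2), -w (i+1), w i` would be a cycle of positive steps in a half-plane
    rw [show i + 2 + 1 = i + 3 by ring] at hj'
    have h₁₂ := hw (i + 1)
    have h₂₃ := hw (i + 2)
    have h₃₀ := hw (i + 3)
    rw [show i + 1 + 1 = i + 2 by ring] at h₁₂
    rw [show i + 2 + 1 = i + 3 by ring] at h₂₃
    rw [hi3] at h₃₀
    have h₃₁ : 0 < det2 (-w (i + 3)) (-w (i + 1)) :=
      det2_pos_trans (b := w (i + 2)) (x := x) (by rw [det2_neg_left]; linarith) hj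
        (by rw [det2_neg_left]; linarith) (by rw [det2_neg_left, ← det2_swap]; exact h₂₃)
        (by rw [det2_neg_right, ← det2_swap]; exact h₁₂)
    have h₃₀' : 0 < det2 (-w (i + 3)) (w i) :=
      det2_pos_trans (b := -w (i + 1)) (x := x) (by rw [det2_neg_left]; linarith)
        (by rw [det2_neg_left]; linarith) hi h₃₁
        (by rw [det2_neg_left, ← det2_swap]; exact hw i)
    rw [det2_neg_left] at h₃₀'
    linarith
  · rw [hi3] at hj'
    linarith

theorem isCompleteFanData_four_iff {v : ZMod 4 → ℤ × ℤ} :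
    IsCompleteFanData 4 v ↔
      (∀ i, Int.gcd (v i).1 (v i).2 = 1) ∧ ∀ i, 1 ≤ detZ (v i) (v (i + 1)) :=
  ⟨fun h => ⟨h.2.1, h.2.2.1⟩, fun ⟨hprim, hdet⟩ =>
    ⟨by norm_num, hprim, hdet, iUnion_coneOf_eq_univ hdet,
      fun _ _ => interior_coneOf_inter_eq_empty_four hdet⟩⟩

theorem ZMod.forall_four {P : ZMod 4 → Prop} : (∀ i, P i) ↔ P 0 ∧ P 1 ∧ P 2 ∧ P 3 :=
  ⟨fun h => ⟨h 0, h 1, h 2, h 3⟩, fun ⟨h0, h1, h2, h3⟩ i => by fin_cases i <;> assumption⟩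

theorem ZMod.univ_four : (Finset.univ : Finset (ZMod 4)) = {0, 1, 2, 3} := by decide

theorem isLDPFanData_data4_iff {p q r : ℤ} (hqr : Int.gcd q r = 1) :
    IsLDPFanData 4 (data4 p q r) ↔
      1 ≤ -r - p * q ∧ 1 ≤ -r ∧ 1 ≤ 1 - q - r ∧ 1 ≤ 2 - p ∧ 1 ≤ 1 - r - p * q + q ∧
        1 ≤ p - p * q - 2 * r := by
  simp only [IsLDPFanData, isCompleteFanData_four_iff, ZMod.forall_four]
  simp +decide [data4, detZ, fanF, hqr]
  grind

theorem numSingular_data4_eq_two_iff (p q r : ℤ) :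
    numSingular 4 (data4 p q r) = 2 ↔ 2 ≤ -r - p * q ∧ 2 ≤ -r := by
  rw [numSingular, Set.ncard_eq_toFinset_card', Set.toFinset_ofPred, Finset.card_filter,
    ZMod.univ_four, Finset.sum_insert (by decide), Finset.sum_insert (by decide),
    Finset.sum_insert (by decide), Finset.sum_singleton]
  simp +decide [data4, detZ]
  split_ifs <;> omega

theorem Int.natAbs_eq_one_of_gcd_eq_one_of_dvd {a b : ℤ} (h : Int.gcd a b = 1) (hab : a ∣ b) :
    a.natAbs = 1 :=
  (Int.gcd_eq_natAbs_left hab).symm.trans h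

/-- Characterization of the quadrilateral LDP fan data with exactly two singular cones. -/
theorem quadrilateral_two_singular (p q r : ℤ) (hqr : Int.gcd q r = 1) :
    (IsLDPFanData 4 (data4 p q r) ∧ numSingular 4 (data4 p q r) = 2) ↔
      (p ≤ 1 ∧ r ≤ min (min (-p * q - 2) (-2)) (min (-q - 1) (q - p * q - 1))) := by
  rw [isLDPFanData_data4_iff hqr, numSingular_data4_eq_two_iff]
  simp only [le_min_iff]
  constructor
  · rintro ⟨⟨-, -, hf₀, hf₁, hf₂, -⟩, hs₂, hs₃⟩
    have hr₀ : r ≠ -q := fun h => by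
      have := Int.natAbs_eq_one_of_gcd_eq_one_of_dvd hqr ⟨-1, by rw [h]; ring⟩
      omega
    have hr₂ : r ≠ q - p * q := fun h => by
      have := Int.natAbs_eq_one_of_gcd_eq_one_of_dvd hqr ⟨1 - p, by rw [h]; ring⟩
      have : q ≤ -2 := by linarith
      omega
    exact ⟨by linarith, ⟨by linarith, by linarith⟩, by omega, by omega⟩
  · rintro ⟨hp, ⟨h₁, h₂⟩, h₃, h₄⟩
    have hq : q ≠ 0 := by
      rintro rfl
      simp only [Int.gcd_zero_left] at hqr
      omega
    have hf₃ : 1 ≤ p - p * q - 2 * r := by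
      rcases hq.lt_or_gt with hq | hq <;> nlinarith
    exact ⟨⟨by linarith, by linarith, by linarith, by linarith, by linarith, hf₃⟩,
      by linarith, by linarith⟩
end

section
/- Let v_1, v_2, v_3 be complete fan data of length 3 with exactly two singular cones. Then the data is automatically LDP fan data, and there exist integers p, q with p, q ≥ 2 and gcd(p, q) = 1 such that the data is equivalent to the data (1,0), (0,1), (−p,−q). Conversely, for any integers p, q ≥ 2 with gcd(p, q) = 1, the cyclic sequence (1,0), (0,1), (−p,−q) is complete LDP fan data of length 3 with exactly two singular cones. -/
/-- The data `(1,0), (0,1), (−p,−q)`. -/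
def data3 (p q : ℤ) : ZMod 3 → ℤ × ℤ := fun i =>
  if i = 0 then (1, 0) else if i = 1 then (0, 1) else (-p, -q)

def detR (x y : ℝ × ℝ) : ℝ := x.1 * y.2 - x.2 * y.1

lemma detR_toR2 (u w : ℤ × ℤ) : detR (toR2 u) (toR2 w) = detZ u w := by
  simp [detR, toR2, detZ]

lemma toR2_ne_zero {u : ℤ × ℤ} (hu : u ≠ 0) : toR2 u ≠ 0 := by
  contrapose! hu
  simp only [toR2, Prod.mk_eq_zero, Int.cast_eq_zero] at hu
  exact Prod.ext hu.1 hu.2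

lemma interior_setOf_detR_eq_zero {x : ℝ × ℝ} (hx : x ≠ 0) :
    interior {z | detR x z = 0} = ∅ := by
  let ℓ : ℝ × ℝ →ₗ[ℝ] ℝ := x.1 • LinearMap.snd ℝ ℝ ℝ - x.2 • LinearMap.fst ℝ ℝ ℝ
  have hker : {z | detR x z = 0} = (LinearMap.ker ℓ : Set (ℝ × ℝ)) := by
    ext z; simp [ℓ, detR]
  rw [hker, ← Set.not_nonempty_iff_eq_empty]
  intro hne
  have hJ : (-x.2, x.1) ∈ LinearMap.ker ℓ := by
    rw [Submodule.eq_top_of_nonempty_interior' _ hne]; trivial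
  have hsq : x.1 * x.1 + x.2 * x.2 = 0 := by simpa [ℓ, add_comm] using hJ
  have h1 : x.1 * x.1 = 0 := by nlinarith [mul_self_nonneg x.1, mul_self_nonneg x.2]
  have h2 : x.2 * x.2 = 0 := by nlinarith [mul_self_nonneg x.1, mul_self_nonneg x.2]
  exact hx (Prod.ext (mul_self_eq_zero.mp h1) (mul_self_eq_zero.mp h2))

lemma detR_nonpos_of_mem_coneOf {u w : ℤ × ℤ} (huw : 0 ≤ detZ u w) {z : ℝ × ℝ}
    (hz : z ∈ coneOf u w) : detR (toR2 w) z ≤ 0 := by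
  obtain ⟨a, b, ha, -, rfl⟩ := hz
  have hdet := detR_toR2 u w
  simp only [detR, toR2, Prod.fst_add, Prod.snd_add, Prod.smul_fst, Prod.smul_snd,
    smul_eq_mul] at hdet ⊢
  nlinarith [mul_nonneg ha (by exact_mod_cast huw : (0 : ℝ) ≤ detZ u w)]

lemma detR_nonneg_of_mem_coneOf {w t : ℤ × ℤ} (hwt : 0 ≤ detZ w t) {z : ℝ × ℝ}
    (hz : z ∈ coneOf w t) : 0 ≤ detR (toR2 w) z := by
  obtain ⟨a, b, -, hb, rfl⟩ := hz
  have hdet := detR_toR2 w t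
  simp only [detR, toR2, Prod.fst_add, Prod.snd_add, Prod.smul_fst, Prod.smul_snd,
    smul_eq_mul] at hdet ⊢
  nlinarith [mul_nonneg hb (by exact_mod_cast hwt : (0 : ℝ) ≤ detZ w t)]

lemma interior_coneOf_inter_interior_coneOf {u w t : ℤ × ℤ} (hw : w ≠ 0)
    (huw : 0 ≤ detZ u w) (hwt : 0 ≤ detZ w t) :
    interior (coneOf u w) ∩ interior (coneOf w t) = ∅ := by
  rw [← interior_inter, ← Set.subset_empty_iff, ← interior_setOf_detR_eq_zero (toR2_ne_zero hw)]
  exact interior_mono fun z hz =>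
    le_antisymm (detR_nonpos_of_mem_coneOf huw hz.1) (detR_nonneg_of_mem_coneOf hwt hz.2)

lemma mem_coneOf_of_detR_nonneg {u w : ℤ × ℤ} (huw : 0 < detZ u w) {z : ℝ × ℝ}
    (hzw : 0 ≤ detR z (toR2 w)) (huz : 0 ≤ detR (toR2 u) z) : z ∈ coneOf u w := by
  have hD : (0 : ℝ) < detR (toR2 u) (toR2 w) := by rw [detR_toR2]; exact_mod_cast huw
  -- Cramer's rule: `det(u,w) z = det(z,w) u + det(u,z) w`.
  refine ⟨detR z (toR2 w) / detR (toR2 u) (toR2 w), detR (toR2 u) z / detR (toR2 u) (toR2 w),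
    div_nonneg hzw hD.le, div_nonneg huz hD.le, ?_⟩
  ext <;> simp only [Prod.fst_add, Prod.snd_add, Prod.smul_fst, Prod.smul_snd, smul_eq_mul] <;>
    rw [div_mul_eq_mul_div, div_mul_eq_mul_div, ← add_div, eq_div_iff hD.ne'] <;>
    simp only [detR, toR2] <;> ring

lemma coneOf_union_eq_univ {u w t : ℤ × ℤ} (huw : 0 < detZ u w) (hwt : 0 < detZ w t)
    (htu : 0 < detZ t u) : coneOf u w ∪ coneOf w t ∪ coneOf t u = Set.univ := by
  refine Set.eq_univ_of_forall fun z => ?_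
  have hcramer : (detZ w t : ℝ) * detR (toR2 u) z + detZ t u * detR (toR2 w) z
      + detZ u w * detR (toR2 t) z = 0 := by
    simp only [← detR_toR2, detR, toR2]; ring
  have h1 : (0 : ℝ) < detZ u w := by exact_mod_cast huw
  have h2 : (0 : ℝ) < detZ w t := by exact_mod_cast hwt
  have h3 : (0 : ℝ) < detZ t u := by exact_mod_cast htu
  have anti : ∀ x, detR z x = -detR x z := fun x => by simp only [detR]; ring
  -- `z` misses all three cones only if `det(u,z)`, `det(w,z)`, `det(t,z)` are all positive or
  -- all nonpositive, and `hcramer` forbids the first and forces them to vanish in the second.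
  rcases lt_or_ge 0 (detR (toR2 u) z) with ha | ha <;>
    rcases lt_or_ge 0 (detR (toR2 w) z) with hb | hb <;>
    rcases lt_or_ge 0 (detR (toR2 t) z) with hc | hc
  all_goals first
    | nlinarith [mul_pos h2 ha, mul_pos h3 hb, mul_pos h1 hc]
    | exact Or.inl (Or.inl (mem_coneOf_of_detR_nonneg huw (by rw [anti]; linarith) ha.le))
    | exact Or.inl (Or.inr (mem_coneOf_of_detR_nonneg hwt (by rw [anti]; linarith) hb.le))
    | exact Or.inr (mem_coneOf_of_detR_nonneg htu (by rw [anti]; linarith) hc.le)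
    | exact Or.inl (Or.inl (mem_coneOf_of_detR_nonneg huw (by rw [anti]; linarith)
        (by nlinarith [mul_nonpos_iff.mpr (Or.inl ⟨h3.le, hb⟩),
          mul_nonpos_iff.mpr (Or.inl ⟨h1.le, hc⟩)])))

lemma ZMod.three_cases (i : ZMod 3) : i = 0 ∨ i = 1 ∨ i = 2 := by
  revert i; decide

lemma ZMod.three_add_one_add_one (i : ZMod 3) : i + 1 + 1 = i + 2 := by
  revert i; decide

lemma ZMod.three_add_two_add_one (i : ZMod 3) : i + 2 + 1 = i := by
  revert i; decide

lemma ZMod.three_eq_add_one_or_eq_add_one {i j : ZMod 3} (hij : i ≠ j) : j = i + 1 ∨ i = j + 1 := by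
  revert i j; decide

lemma ZMod.three_range_eq {α : Type*} (v : ZMod 3 → α) (k : ZMod 3) :
    Set.range v = {v k, v (k + 1), v (k + 2)} := by
  have hk : ∀ i : ZMod 3, i = k ∨ i = k + 1 ∨ i = k + 2 := by revert k; decide
  ext x
  constructor
  · rintro ⟨i, rfl⟩
    rcases hk i with rfl | rfl | rfl <;> simp
  · rintro (rfl | rfl | rfl) <;> exact ⟨_, rfl⟩

lemma ne_zero_of_gcd_eq_one {u : ℤ × ℤ} (hu : Int.gcd u.1 u.2 = 1) : u ≠ 0 := by
  rintro rfl
  simp at hu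

lemma isCompleteFanData_three {v : ZMod 3 → ℤ × ℤ} (hprim : ∀ i, Int.gcd (v i).1 (v i).2 = 1)
    (hdet : ∀ i, 1 ≤ detZ (v i) (v (i + 1))) : IsCompleteFanData 3 v := by
  have hpos (i : ZMod 3) : 0 < detZ (v i) (v (i + 1)) := zero_lt_one.trans_le (hdet i)
  have hpos₁ (i : ZMod 3) : 0 < detZ (v (i + 1)) (v (i + 2)) := by
    simpa only [ZMod.three_add_one_add_one] using hpos (i + 1)
  have hpos₂ (i : ZMod 3) : 0 < detZ (v (i + 2)) (v i) := by
    simpa only [ZMod.three_add_two_add_one] using hpos (i + 2)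
  refine ⟨le_rfl, hprim, hdet, ?_, fun i j hij => ?_⟩
  · refine Set.eq_univ_of_forall fun z => ?_
    rcases coneOf_union_eq_univ (hpos 0) (hpos₁ 0) (hpos₂ 0) ▸ Set.mem_univ z with
      (hz | hz) | hz
    exacts [Set.mem_iUnion.2 ⟨0, hz⟩, Set.mem_iUnion.2 ⟨1, hz⟩, Set.mem_iUnion.2 ⟨2, hz⟩]
  · rcases ZMod.three_eq_add_one_or_eq_add_one hij with rfl | rfl
    · exact interior_coneOf_inter_interior_coneOf (ne_zero_of_gcd_eq_one (hprim _))
        (hpos i).le (hpos _).le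
    · rw [Set.inter_comm]
      exact interior_coneOf_inter_interior_coneOf (ne_zero_of_gcd_eq_one (hprim _))
        (hpos j).le (hpos _).le

lemma IsCompleteFanData.isLDPFanData_three {v : ZMod 3 → ℤ × ℤ} (hv : IsCompleteFanData 3 v) :
    IsLDPFanData 3 v := by
  refine ⟨hv, fun i => ?_⟩
  have h₀ := hv.2.2.1 i
  have h₁ := hv.2.2.1 (i + 1)
  have h₂ := hv.2.2.1 (i + 2)
  rw [ZMod.three_add_one_add_one] at h₁
  rw [ZMod.three_add_two_add_one] at h₂
  rw [fanF, sub_eq_add_neg, show (-1 : ZMod 3) = 2 from rfl]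
  linarith

lemma ZMod.three_exists_of_ncard_eq_two {S : Set (ZMod 3)} (hS : S.ncard = 2) :
    ∃ k, k ∉ S ∧ k + 1 ∈ S ∧ k + 2 ∈ S := by
  obtain ⟨x, y, hxy, rfl⟩ := Set.ncard_eq_two.mp hS
  clear hS
  simp only [Set.mem_insert_iff, Set.mem_singleton_iff]
  revert x y; decide

lemma exists_detZ_eq_one_of_numSingular_eq_two {v : ZMod 3 → ℤ × ℤ}
    (hdet : ∀ i, 1 ≤ detZ (v i) (v (i + 1))) (hns : numSingular 3 v = 2) :
    ∃ k, detZ (v k) (v (k + 1)) = 1 ∧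
      2 ≤ detZ (v (k + 1)) (v (k + 2)) ∧ 2 ≤ detZ (v (k + 2)) (v k) := by
  obtain ⟨k, hk₀, hk₁, hk₂⟩ := ZMod.three_exists_of_ncard_eq_two hns
  simp only [Set.mem_ofPred_eq, not_le, ZMod.three_add_one_add_one,
    ZMod.three_add_two_add_one] at hk₀ hk₁ hk₂
  exact ⟨k, le_antisymm (Int.lt_add_one_iff.mp hk₀) (hdet k), hk₁, hk₂⟩

lemma gcd_detZ_eq_one {u w t : ℤ × ℤ} (huw : detZ u w = 1) (ht : Int.gcd t.1 t.2 = 1) :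
    Int.gcd (detZ w t) (detZ t u) = 1 := by
  obtain ⟨a, b, hab⟩ := Int.isCoprime_iff_gcd_eq_one.mpr ht
  refine Int.isCoprime_iff_gcd_eq_one.mp ⟨-(a * u.1 + b * u.2), -(a * w.1 + b * w.2), ?_⟩
  simp only [detZ] at huw ⊢
  linear_combination (a * t.1 + b * t.2) * huw + hab

lemma range_data3 (p q : ℤ) : Set.range (data3 p q) = {(1, 0), (0, 1), (-p, -q)} :=
  ZMod.three_range_eq _ 0

lemma fanEquiv_data3 (v : ZMod 3 → ℤ × ℤ) (k : ZMod 3) (hk : detZ (v k) (v (k + 1)) = 1) :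
    FanEquiv v (data3 (detZ (v (k + 1)) (v (k + 2))) (detZ (v (k + 2)) (v k))) := by
  simp only [detZ] at hk ⊢
  refine ⟨!![(v (k + 1)).2, -(v (k + 1)).1; -(v k).2, (v k).1], ?_, ?_⟩
  · rw [Matrix.det_fin_two_of]
    convert isUnit_one
    linear_combination hk
  · rw [ZMod.three_range_eq v k, range_data3]
    generalize v k = u, v (k + 1) = w, v (k + 2) = t at hk ⊢
    simp only [Set.image_insert_eq, Set.image_singleton, Matrix.of_apply, Matrix.cons_val',
      Matrix.cons_val_zero, Matrix.cons_val_one, Matrix.empty_val', Matrix.cons_val_fin_one]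
    refine congrArg₂ _ (Prod.ext ?_ ?_) (congrArg₂ _ (Prod.ext ?_ ?_) (congrArg _ (Prod.ext ?_ ?_)))
    all_goals first | ring1 | linear_combination hk

lemma detZ_data3 (p q : ℤ) (i : ZMod 3) :
    detZ (data3 p q i) (data3 p q (i + 1)) = if i = 0 then 1 else if i = 1 then p else q := by
  rcases ZMod.three_cases i with rfl | rfl | rfl <;> simp +decide [data3, detZ]

lemma gcd_data3 {p q : ℤ} (hpq : Int.gcd p q = 1) (i : ZMod 3) :
    Int.gcd (data3 p q i).1 (data3 p q i).2 = 1 := by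
  rcases ZMod.three_cases i with rfl | rfl | rfl <;> simp +decide [data3, hpq]

lemma numSingular_data3 {p q : ℤ} (hp : 2 ≤ p) (hq : 2 ≤ q) : numSingular 3 (data3 p q) = 2 := by
  have hsing : {i : ZMod 3 | 2 ≤ detZ (data3 p q i) (data3 p q (i + 1))} = {1, 2} := by
    ext i
    rcases ZMod.three_cases i with rfl | rfl | rfl <;> simp +decide [detZ_data3, hp, hq]
  rw [numSingular, hsing, Set.ncard_pair (by decide)]

/-- Classification of triangular fan data with exactly two singular cones. -/
theorem triangle_two_singular :
    (∀ v : ZMod 3 → ℤ × ℤ, IsCompleteFanData 3 v → numSingular 3 v = 2 →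
      IsLDPFanData 3 v ∧
      ∃ p q : ℤ, 2 ≤ p ∧ 2 ≤ q ∧ Int.gcd p q = 1 ∧ FanEquiv v (data3 p q)) ∧
    (∀ p q : ℤ, 2 ≤ p → 2 ≤ q → Int.gcd p q = 1 →
      IsLDPFanData 3 (data3 p q) ∧ numSingular 3 (data3 p q) = 2) := by
  refine ⟨fun v hv hns => ?_, fun p q hp hq hpq => ?_⟩
  · refine ⟨hv.isLDPFanData_three, ?_⟩
    obtain ⟨-, hprim, hdet, -, -⟩ := hv
    obtain ⟨k, hk, hp, hq⟩ := exists_detZ_eq_one_of_numSingular_eq_two hdet hns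
    exact ⟨_, _, hp, hq, gcd_detZ_eq_one hk (hprim _), fanEquiv_data3 v k hk⟩
  · have hdet (i : ZMod 3) : 1 ≤ detZ (data3 p q i) (data3 p q (i + 1)) := by
      rw [detZ_data3]; split_ifs <;> omega
    exact ⟨(isCompleteFanData_three (gcd_data3 hpq) hdet).isLDPFanData_three,
      numSingular_data3 hp hq⟩
end

section
/- If v_1, …, v_d is LDP fan data with exactly three singular cones, then d ≤ 6. Equivalently, a toric log del Pezzo surface with exactly three singular points has Picard number at most four. -/
/-!
Read the rays of the fan in order from some starting index and lift their arguments to real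
angles `θ₀ < θ₁ < ⋯ < θ_d`, consecutive ones differing by less than `π`. Since the cones have
disjoint interiors, the total turn `θ_d - θ₀` is at most `2π`. If `v_{k+1}, v_{k+2}` span a smooth
cone, the inequalities `f(k+1) ≥ 1`, `f(k+2) ≥ 1` together with the Plücker relation
`det(v_k, v_{k+2}) det(v_{k+1}, v_{k+3}) = det(v_k, v_{k+1}) det(v_{k+2}, v_{k+3}) + det(v_k, v_{k+3})`
make one of `det(v_k, v_{k+2})`, `det(v_{k+1}, v_{k+3})`, `det(v_k, v_{k+3})` nonpositive, hence
`θ_{k+3} - θ_k ≥ π`. With only three singular cones and `d ≥ 7` there are two smooth cones three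
steps apart, which gives `θ₆ - θ₀ ≥ 2π` although `θ₆ < θ_d`.
-/

open Real

namespace FanData

theorem exists_notMem_and_add_notMem {G : Type*} [AddGroup G] [Finite G] (S : Set G) (k : G)
    (hS : 2 * S.ncard < Nat.card G) : ∃ j, j ∉ S ∧ j + k ∉ S := by
  by_contra! hcover
  have hsub : (Set.univ : Set G) ⊆ S ∪ (· - k) '' S := fun j _ =>
    or_iff_not_imp_left.2 fun hj => ⟨j + k, hcover j hj, add_sub_cancel_right j k⟩
  have h₁ := Set.ncard_le_ncard hsub (Set.toFinite _)
  have h₂ := Set.ncard_union_le S ((· - k) '' S)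
  have h₃ := Set.ncard_image_le (f := (· - k)) (s := S) (Set.toFinite S)
  rw [Set.ncard_univ] at h₁
  omega

theorem exists_le_and_lt_succ {α : Type*} [LinearOrder α] {B : ℕ → α} {t : α} (h₀ : B 0 ≤ t) :
    ∀ {n : ℕ}, t < B n → ∃ m < n, B m ≤ t ∧ t < B (m + 1)
  | 0, hn => absurd h₀ (not_le.2 hn)
  | n + 1, hn => by
    by_cases htn : t < B n
    · obtain ⟨m, hm, hBm⟩ := exists_le_and_lt_succ h₀ htn
      exact ⟨m, hm.trans n.lt_succ_self, hBm⟩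
    · exact ⟨n, n.lt_succ_self, not_lt.1 htn, hn⟩

theorem detZ_swap (u w : ℤ × ℤ) : detZ w u = -detZ u w := by
  simp only [detZ]; ring

theorem detZ_plucker (a b c e : ℤ × ℤ) :
    detZ a c * detZ b e = detZ a b * detZ c e + detZ a e * detZ b c := by
  simp only [detZ]; ring

theorem detZ_nonpos_of_detZ_eq_one {a b c e : ℤ × ℤ} (hbc : detZ b c = 1)
    (hac : 0 < detZ a c) (hbe : 0 < detZ b e)
    (hfb : detZ a c < detZ a b + detZ b c) (hfc : detZ b e < detZ b c + detZ c e) :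
    detZ a e ≤ 0 := by
  have := detZ_plucker a b c e
  rw [hbc] at this hfb hfc
  nlinarith

def detR (x y : ℝ × ℝ) : ℝ := x.1 * y.2 - x.2 * y.1

theorem detR_toR2 (u w : ℤ × ℤ) : detR (toR2 u) (toR2 w) = detZ u w := by
  simp only [detR, toR2, detZ]; push_cast; ring

noncomputable def polar (r θ : ℝ) : ℝ × ℝ := (r * cos θ, r * sin θ)

theorem detR_polar (r s θ φ : ℝ) : detR (polar r θ) (polar s φ) = r * s * sin (φ - θ) := by
  simp only [detR, polar, sin_sub]; ring

theorem polar_add_two_pi (r θ : ℝ) : polar r (θ + 2 * π) = polar r θ := by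
  simp [polar]

theorem mem_interior_coneOf {u w : ℤ × ℤ} (huw : 0 < detZ u w) {x : ℝ × ℝ}
    (hux : 0 < detR (toR2 u) x) (hxw : 0 < detR x (toR2 w)) : x ∈ interior (coneOf u w) := by
  have hD : (0 : ℝ) < detZ u w := by exact_mod_cast huw
  let U : Set (ℝ × ℝ) := {y | 0 < detR (toR2 u) y ∧ 0 < detR y (toR2 w)}
  refine interior_maximal (t := U) ?_ ?_ (show x ∈ U from ⟨hux, hxw⟩)
  · rintro y ⟨huy, hyw⟩
    refine ⟨detR y (toR2 w) / detZ u w, detR (toR2 u) y / detZ u w,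
      (div_pos hyw hD).le, (div_pos huy hD).le, ?_⟩
    -- Cramer's rule
    rw [← detR_toR2] at hD ⊢
    ext <;> simp only [Prod.fst_add, Prod.snd_add, Prod.smul_fst, Prod.smul_snd, smul_eq_mul] <;>
      field_simp <;> simp only [detR] <;> ring
  · have hcont : ∀ p : ℝ × ℝ, Continuous (detR p) ∧ Continuous (detR · p) := fun p => by
      unfold detR; constructor <;> fun_prop
    exact (isOpen_lt continuous_const (hcont _).1).inter (isOpen_lt continuous_const (hcont _).2)

theorem polar_mem_interior_coneOf {u w : ℤ × ℤ} {r s θ φ c : ℝ} (hr : 0 < r) (hs : 0 < s)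
    (hu : toR2 u = polar r θ) (hw : toR2 w = polar s φ)
    (hθc : θ < c) (hcφ : c < φ) (hφθ : φ < θ + π) : polar 1 c ∈ interior (coneOf u w) := by
  have hsin : ∀ {x y : ℝ}, x < y → y < x + π → 0 < sin (y - x) := fun hxy hyx =>
    sin_pos_of_pos_of_lt_pi (by linarith) (by linarith)
  refine mem_interior_coneOf ?_ ?_ ?_
  · have := detR_toR2 u w
    rw [hu, hw, detR_polar] at this
    exact_mod_cast this ▸ mul_pos (mul_pos hr hs) (hsin (hθc.trans hcφ) hφθ)
  · rw [hu, detR_polar]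
    exact mul_pos (mul_pos hr one_pos) (hsin hθc (by linarith))
  · rw [hw, detR_polar]
    exact mul_pos (mul_pos one_pos hs) (hsin hcφ (by linarith))

def toComplex (u : ℤ × ℤ) : ℂ := ⟨u.1, u.2⟩

theorem toComplex_ne_zero_of_detZ_pos {u w : ℤ × ℤ} (h : 0 < detZ u w) : toComplex u ≠ 0 := by
  intro hu
  have h₁ : (u.1 : ℝ) = 0 := congrArg Complex.re hu
  have h₂ : (u.2 : ℝ) = 0 := congrArg Complex.im hu
  norm_cast at h₁ h₂
  simp [detZ, h₁, h₂] at h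

theorem im_toComplex_div_toComplex (u w : ℤ × ℤ) :
    (toComplex w / toComplex u).im = detZ u w / Complex.normSq (toComplex u) := by
  simp only [Complex.div_im, detZ, toComplex]
  push_cast
  ring

theorem arg_mem_Ioo_of_im_pos {w : ℂ} (hw : 0 < w.im) : Complex.arg w ∈ Set.Ioo 0 π :=
  ⟨(Complex.arg_nonneg_iff.2 hw.le).lt_of_ne fun h => hw.ne' (Complex.arg_eq_zero_iff.1 h.symm).2,
    (Complex.arg_le_pi w).lt_of_ne fun h => hw.ne' (Complex.arg_eq_pi_iff.1 h).2⟩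

noncomputable def argLift (z : ℕ → ℂ) : ℕ → ℝ
  | 0 => Complex.arg (z 0)
  | n + 1 => argLift z n + Complex.arg (z (n + 1) / z n)

theorem norm_mul_exp_argLift {z : ℕ → ℂ} (hz : ∀ n, z n ≠ 0) :
    ∀ n, (‖z n‖ : ℂ) * Complex.exp (argLift z n * Complex.I) = z n
  | 0 => Complex.norm_mul_exp_arg_mul_I _
  | n + 1 =>
    calc (‖z (n + 1)‖ : ℂ) * Complex.exp (argLift z (n + 1) * Complex.I)
        = (‖z (n + 1) / z n‖ * Complex.exp (Complex.arg (z (n + 1) / z n) * Complex.I)) *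
          (‖z n‖ * Complex.exp (argLift z n * Complex.I)) := by
          have : (‖z n‖ : ℂ) ≠ 0 := by simpa using hz n
          rw [norm_div, argLift]
          push_cast
          rw [add_mul, Complex.exp_add]
          field_simp
      _ = z (n + 1) := by
          rw [Complex.norm_mul_exp_arg_mul_I, norm_mul_exp_argLift hz n, div_mul_cancel₀ _ (hz n)]

section Angle

variable {u : ℕ → ℤ × ℤ}

noncomputable def angle (u : ℕ → ℤ × ℤ) : ℕ → ℝ := argLift fun n => toComplex (u n)

theorem norm_toComplex_pos (hdet : ∀ n, 0 < detZ (u n) (u (n + 1))) (n : ℕ) :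
    0 < ‖toComplex (u n)‖ :=
  norm_pos_iff.2 (toComplex_ne_zero_of_detZ_pos (hdet n))

theorem toR2_eq_polar_angle (hdet : ∀ n, 0 < detZ (u n) (u (n + 1))) (n : ℕ) :
    toR2 (u n) = polar ‖toComplex (u n)‖ (angle u n) := by
  have h := norm_mul_exp_argLift (fun n => (norm_toComplex_pos hdet n).ne' ∘ norm_eq_zero.2) n
  conv_lhs => rw [show toR2 (u n) = ((toComplex (u n)).re, (toComplex (u n)).im) from rfl, ← h]
  simp [polar, angle, Complex.exp_ofReal_mul_I_re, Complex.exp_ofReal_mul_I_im]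

theorem detZ_eq_mul_sin_angle (hdet : ∀ n, 0 < detZ (u n) (u (n + 1))) (m n : ℕ) :
    (detZ (u m) (u n) : ℝ) =
      ‖toComplex (u m)‖ * ‖toComplex (u n)‖ * sin (angle u n - angle u m) := by
  rw [← detR_toR2, toR2_eq_polar_angle hdet, toR2_eq_polar_angle hdet, detR_polar]

theorem angle_succ_sub_mem_Ioo (hdet : ∀ n, 0 < detZ (u n) (u (n + 1))) (n : ℕ) :
    angle u (n + 1) - angle u n ∈ Set.Ioo 0 π := by
  have h : angle u (n + 1) - angle u n = Complex.arg (toComplex (u (n + 1)) / toComplex (u n)) := by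
    simp [angle, argLift]
  rw [h]
  refine arg_mem_Ioo_of_im_pos ?_
  rw [im_toComplex_div_toComplex]
  exact div_pos (by exact_mod_cast hdet n)
    (Complex.normSq_pos.2 (toComplex_ne_zero_of_detZ_pos (hdet n)))

theorem strictMono_angle (hdet : ∀ n, 0 < detZ (u n) (u (n + 1))) : StrictMono (angle u) :=
  strictMono_nat_of_lt_succ fun n => by linarith [(angle_succ_sub_mem_Ioo hdet n).1]

theorem pi_le_angle_sub_of_detZ_nonpos (hdet : ∀ n, 0 < detZ (u n) (u (n + 1))) {a b : ℕ}
    (hab : a < b) (h : detZ (u a) (u b) ≤ 0) : π ≤ angle u b - angle u a := by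
  by_contra! hlt
  have hsin := sin_pos_of_pos_of_lt_pi (sub_pos.2 (strictMono_angle hdet hab)) hlt
  have hpos : (0 : ℝ) < detZ (u a) (u b) := by
    rw [detZ_eq_mul_sin_angle hdet]
    exact mul_pos (mul_pos (norm_toComplex_pos hdet a) (norm_toComplex_pos hdet b)) hsin
  have : (detZ (u a) (u b) : ℝ) ≤ 0 := by exact_mod_cast h
  linarith

theorem angle_le_angle_zero_add_two_pi (hdet : ∀ n, 0 < detZ (u n) (u (n + 1))) {d : ℕ}
    (hdisj : ∀ m, 0 < m → m < d →
      Disjoint (interior (coneOf (u 0) (u 1))) (interior (coneOf (u m) (u (m + 1))))) :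
    angle u d ≤ angle u 0 + 2 * π := by
  have hB := angle_succ_sub_mem_Ioo hdet
  have hr := norm_toComplex_pos hdet
  have hu := toR2_eq_polar_angle hdet
  set B := angle u
  by_contra! hd
  obtain ⟨m, hmd, hBm, hBm'⟩ := exists_le_and_lt_succ (by linarith [pi_pos]) hd
  have hm : 0 < m := Nat.pos_of_ne_zero fun hm => by
    subst hm; linarith [(hB 0).2, pi_pos]
  -- a direction inside the cone `0` after one full turn, and inside the cone `m`
  obtain ⟨c, hc⟩ : ∃ c, c = (B 0 + 2 * π + min (B 1 + 2 * π) (B (m + 1))) / 2 := ⟨_, rfl⟩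
  have hmin₁ := min_le_left (B 1 + 2 * π) (B (m + 1))
  have hmin₂ := min_le_right (B 1 + 2 * π) (B (m + 1))
  have hmin := lt_min (show B 0 + 2 * π < B 1 + 2 * π by linarith [(hB 0).1]) hBm'
  have h₀ : polar 1 c ∈ interior (coneOf (u 0) (u 1)) :=
    polar_mem_interior_coneOf (hr 0) (hr 1) (θ := B 0 + 2 * π) (φ := B 1 + 2 * π)
      (by rw [polar_add_two_pi]; exact hu 0) (by rw [polar_add_two_pi]; exact hu 1)
      (by linarith) (by linarith) (by linarith [(hB 0).2])
  have hₘ : polar 1 c ∈ interior (coneOf (u m) (u (m + 1))) :=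
    polar_mem_interior_coneOf (hr m) (hr (m + 1)) (hu m) (hu (m + 1)) (by linarith)
      (by linarith) (by linarith [(hB m).2])
  exact Set.disjoint_left.1 (hdisj m hm hmd) h₀ hₘ

theorem pi_le_angle_add_three_sub (hdet : ∀ n, 0 < detZ (u n) (u (n + 1)))
    (hf : ∀ n, detZ (u n) (u (n + 2)) < detZ (u n) (u (n + 1)) + detZ (u (n + 1)) (u (n + 2)))
    {a : ℕ} (hsmooth : detZ (u (a + 1)) (u (a + 2)) = 1) : π ≤ angle u (a + 3) - angle u a := by
  have hmono := strictMono_angle hdet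
  by_cases hac : detZ (u a) (u (a + 2)) ≤ 0
  · have := pi_le_angle_sub_of_detZ_nonpos hdet (by omega) hac
    linarith [hmono (show a + 2 < a + 3 by omega)]
  by_cases hbe : detZ (u (a + 1)) (u (a + 3)) ≤ 0
  · have := pi_le_angle_sub_of_detZ_nonpos hdet (by omega) hbe
    linarith [hmono (show a < a + 1 by omega)]
  exact pi_le_angle_sub_of_detZ_nonpos hdet (by omega)
    (detZ_nonpos_of_detZ_eq_one hsmooth (not_le.1 hac) (not_le.1 hbe) (hf a) (hf (a + 1)))

end Angle

def unroll {d : ℕ} (v : ZMod d → ℤ × ℤ) (i₀ : ZMod d) (n : ℕ) : ℤ × ℤ := v (i₀ + n)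

theorem unroll_add_one {d : ℕ} (v : ZMod d → ℤ × ℤ) (i₀ : ZMod d) (n : ℕ) :
    unroll v i₀ (n + 1) = v (i₀ + n + 1) := by
  simp only [unroll, Nat.cast_succ, add_assoc]

end FanData

open FanData

section Unroll

variable {d : ℕ} {v : ZMod d → ℤ × ℤ}

theorem IsCompleteFanData.detZ_unroll_pos (h : IsCompleteFanData d v) (i₀ : ZMod d) (n : ℕ) :
    0 < detZ (unroll v i₀ n) (unroll v i₀ (n + 1)) := by
  rw [unroll_add_one]
  exact h.2.2.1 _

theorem IsLDPFanData.detZ_unroll_lt (h : IsLDPFanData d v) (i₀ : ZMod d) (n : ℕ) :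
    detZ (unroll v i₀ n) (unroll v i₀ (n + 2)) <
      detZ (unroll v i₀ n) (unroll v i₀ (n + 1)) +
        detZ (unroll v i₀ (n + 1)) (unroll v i₀ (n + 2)) := by
  have hf := h.2 (i₀ + (n + 1 : ℕ))
  have e₁ : i₀ + ((n + 1 : ℕ) : ZMod d) - 1 = i₀ + n := by push_cast; ring
  have e₂ : i₀ + ((n + 1 : ℕ) : ZMod d) + 1 = i₀ + (n + 2 : ℕ) := by push_cast; ring
  rw [fanF, e₁, e₂, detZ_swap (v (i₀ + n)) (v (i₀ + (n + 2 : ℕ)))] at hf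
  simp only [unroll]
  omega

theorem IsCompleteFanData.disjoint_interior_unroll (h : IsCompleteFanData d v) (i₀ : ZMod d)
    {m : ℕ} (hm : 0 < m) (hmd : m < d) :
    Disjoint (interior (coneOf (unroll v i₀ 0) (unroll v i₀ 1)))
      (interior (coneOf (unroll v i₀ m) (unroll v i₀ (m + 1)))) := by
  have hne : i₀ ≠ i₀ + m := fun he => by
    have : ((m : ℕ) : ZMod d) = 0 := by simpa using he.symm
    rw [ZMod.natCast_eq_zero_iff] at this
    exact absurd (Nat.le_of_dvd hm this) (not_le.2 hmd)
  rw [Set.disjoint_iff_inter_eq_empty, ← zero_add 1, unroll_add_one, unroll_add_one]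
  simpa [unroll] using h.2.2.2.2 _ _ hne

theorem IsCompleteFanData.detZ_unroll_eq_one (h : IsCompleteFanData d v) (i : ZMod d) (k : ℕ)
    (hk : detZ (v (i + k)) (v (i + k + 1)) < 2) :
    detZ (unroll v (i - 1) (k + 1)) (unroll v (i - 1) (k + 2)) = 1 := by
  have hpos := h.2.2.1 (i + k)
  convert (show detZ (v (i + k)) (v (i + k + 1)) = 1 by omega) using 2 <;>
    simp only [unroll] <;> congr 1 <;> push_cast <;> ring

end Unroll

/-- A toric log del Pezzo surface with exactly three singular points has Picard
number at most four: LDP fan data with exactly three singular cones has length at most 6. -/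
theorem three_singular_length_le_six (d : ℕ) (v : ZMod d → ℤ × ℤ)
    (h : IsLDPFanData d v) (hs : numSingular d v = 3) : d ≤ 6 := by
  by_contra! hd
  have : NeZero d := ⟨by omega⟩
  obtain ⟨j, hj, hj₃⟩ := exists_notMem_and_add_notMem {i : ZMod d | 2 ≤ detZ (v i) (v (i + 1))} 3
    (by rw [Nat.card_zmod]; unfold numSingular at hs; omega)
  have hdet := h.1.detZ_unroll_pos (j - 1)
  have h₁ := pi_le_angle_add_three_sub hdet (h.detZ_unroll_lt _) (a := 0)
    (h.1.detZ_unroll_eq_one j 0 (by simpa using hj))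
  have h₂ := pi_le_angle_add_three_sub hdet (h.detZ_unroll_lt _) (a := 3)
    (h.1.detZ_unroll_eq_one j 3 (by simpa using hj₃))
  have h₃ := strictMono_angle hdet (show 6 < d by omega)
  have h₄ := angle_le_angle_zero_add_two_pi hdet fun m hm hmd =>
    h.1.disjoint_interior_unroll (j - 1) hm hmd
  linarith
end

section
/- Let v_1, …, v_d be LDP fan data with d ≥ 4, and suppose that for some index i one has det(v_{i−1}, v_i) ≥ 2, det(v_i, v_{i+1}) = 1, and det(v_{i+1}, v_{i+2}) ≥ 2 (i.e., the cones σ_{i−1} and σ_{i+1} are singular while σ_i is nonsingular). Then det(v_{i+2}, v_{i−1}) ≥ 2; in particular, the cones σ_{i−1}, σ_i, σ_{i+1} together cover more than a half-plane. -/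
/-! Write `a, b, c, e` for `v_{i-1}, …, v_{i+2}`, and `Q = det(a,b)`, `R = det(c,e)`,
`D = det(e,a)`. As `det(b,c) = 1`, the Plücker relation reads `det(b,e) det(a,c) = RQ - D`,
and `f(i), f(i+1) ≥ 1` say `det(a,c) ≤ Q`, `det(b,e) ≤ R`. If `D ≤ 1`, the product
`det(b,e) det(a,c) ≥ RQ - 1` is positive.

If both factors are positive, they must equal `R` and `Q`, so `e = R (c - b)` is not primitive.
If both are negative, `σ_{i-1} ∪ σ_i` and `σ_i ∪ σ_{i+1}` each exceed a half-plane; disjointness of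
the cones forces `D = 1`, and then `f(i+2) ≥ 1` puts `v_{i+3}` on the ray of `a`. Disjointness
again leaves only `v_{i+3} = a` (so `d = 4`), where `f(i-1) ≥ 1` and `f(i+2) ≥ 1` make
`RQ - 1 = det(b,e) det(a,c)` impossible. -/

theorem detZ_anticomm (u w : ℤ × ℤ) : -detZ u w = detZ w u := by
  unfold detZ; ring

theorem detZ_plucker (a b c e : ℤ × ℤ) :
    detZ b e * detZ a c = detZ c e * detZ a b - detZ e a * detZ b c := by
  unfold detZ; ring

theorem detZ_dvd_one_of_detZ_eq {b c u : ℤ × ℤ} (hbc : detZ b c = 1)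
    (hu : Int.gcd u.1 u.2 = 1) (h : detZ b u = detZ c u) : detZ c u ∣ 1 := by
  -- Cramer's rule: `u = det(u,c) b + det(b,u) c = det(c,u) (c - b)`.
  have h₁ : u.1 = detZ c u * (c.1 - b.1) := by
    unfold detZ at *; linear_combination (-u.1) * hbc + c.1 * h
  have h₂ : u.2 = detZ c u * (c.2 - b.2) := by
    unfold detZ at *; linear_combination (-u.2) * hbc + c.2 * h
  exact (Int.isCoprime_iff_gcd_eq_one.mpr hu).isUnit_of_dvd' ⟨_, h₁⟩ ⟨_, h₂⟩ |>.dvd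

theorem eq_and_eq_of_sub_one_le_mul {s p Q R : ℤ} (hs : 0 < s) (hp : 0 < p) (hsQ : s ≤ Q)
    (hpR : p ≤ R) (hQ : 2 ≤ Q) (hR : 2 ≤ R) (h : Q * R - 1 ≤ s * p) : s = Q ∧ p = R := by
  have hsQ' : s = Q := by
    by_contra hne
    nlinarith [mul_le_mul (show s ≤ Q - 1 by omega) hpR hp.le (by omega)]
  subst hsQ'
  refine ⟨rfl, ?_⟩
  by_contra hne
  nlinarith [mul_le_mul_of_nonneg_left (show p ≤ R - 1 by omega) hs.le]

theorem toR2_mem_interior_coneOf {u w z : ℤ × ℤ} (huw : 0 < detZ u w) (hu : 0 < detZ u z)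
    (hw : 0 < detZ z w) : toR2 z ∈ interior (coneOf u w) := by
  set U : Set (ℝ × ℝ) :=
    {x | 0 < (u.1 : ℝ) * x.2 - u.2 * x.1} ∩ {x | 0 < x.1 * (w.2 : ℝ) - x.2 * w.1}
  have hUopen : IsOpen U := by
    apply IsOpen.inter <;> exact isOpen_lt continuous_const (by fun_prop)
  have huw' : (0 : ℝ) < (u.1 : ℝ) * w.2 - u.2 * w.1 := by exact_mod_cast huw
  have hUsub : U ⊆ coneOf u w := by
    rintro x ⟨hx₁, hx₂⟩
    refine ⟨(x.1 * w.2 - x.2 * w.1) / (u.1 * w.2 - u.2 * w.1),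
      (u.1 * x.2 - u.2 * x.1) / (u.1 * w.2 - u.2 * w.1), (div_pos hx₂ huw').le,
      (div_pos hx₁ huw').le, ?_⟩
    ext <;> simp only [toR2, Prod.fst_add, Prod.snd_add, Prod.smul_fst, Prod.smul_snd,
      smul_eq_mul] <;> rw [div_mul_eq_mul_div, div_mul_eq_mul_div, ← add_div,
        eq_div_iff huw'.ne'] <;> ring
  unfold detZ at hu hw
  refine interior_maximal hUsub hUopen ⟨?_, ?_⟩
  · simp only [toR2, Set.mem_ofPred_eq]; exact_mod_cast hu
  · simp only [toR2, Set.mem_ofPred_eq]; exact_mod_cast hw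

theorem fanF_eq {d : ℕ} (v : ZMod d → ℤ × ℤ) {j k l : ZMod d} (hjk : j + 1 = k)
    (hkl : k + 1 = l) :
    fanF d v k = detZ (v j) (v k) + detZ (v k) (v l) + detZ (v l) (v j) := by
  subst hjk hkl; simp only [fanF, add_sub_cancel_right]

namespace IsCompleteFanData

variable {d : ℕ} {v : ZMod d → ℤ × ℤ}

theorem one_le_detZ (hv : IsCompleteFanData d v) {j k : ZMod d} (hjk : j + 1 = k) :
    1 ≤ detZ (v j) (v k) :=
  hjk ▸ hv.2.2.1 j

theorem eq_of_mem_interior (hv : IsCompleteFanData d v) {j k : ZMod d} {z : ℤ × ℤ}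
    (hj : 0 < detZ (v j) z) (hj' : 0 < detZ z (v (j + 1)))
    (hk : 0 < detZ (v k) z) (hk' : 0 < detZ z (v (k + 1))) : j = k := by
  by_contra hjk
  refine Set.eq_empty_iff_forall_notMem.mp (hv.2.2.2.2 j k hjk) (toR2 z) ⟨?_, ?_⟩
  · exact toR2_mem_interior_coneOf (hv.one_le_detZ rfl) hj hj'
  · exact toR2_mem_interior_coneOf (hv.one_le_detZ rfl) hk hk'

/-- No ray `v_k` other than `v_j` lies in `σ_j` off the ray of `v_{j+1}`. -/
theorem detZ_nonpos_of_nonneg (hv : IsCompleteFanData d v) {j j' k : ZMod d} (hjk : j ≠ k)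
    (hj : j + 1 = j') (h : 0 ≤ detZ (v j) (v k)) : detZ (v k) (v j') ≤ 0 := by
  subst hj
  by_contra! hpos
  -- For `N` large, `z = N v_k + v_{k+1}` lies in the interiors of both `σ_k` and `σ_j`.
  set N : ℤ := |detZ (v (j + 1)) (v (k + 1))| + 1
  set z : ℤ × ℤ := N • v k + v (k + 1) with hz
  have hk := hv.one_le_detZ (j := k) rfl
  have hj := hv.one_le_detZ (j := j) rfl
  obtain ⟨hkz, hzk, hzj, hjz⟩ : detZ (v k) z = detZ (v k) (v (k + 1)) ∧
      detZ z (v (k + 1)) = N * detZ (v k) (v (k + 1)) ∧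
      detZ z (v (j + 1)) = N * detZ (v k) (v (j + 1)) - detZ (v (j + 1)) (v (k + 1)) ∧
      detZ (v j) z * detZ (v k) (v (j + 1)) = detZ (v j) (v k) * detZ z (v (j + 1)) +
        detZ (v j) (v (j + 1)) * detZ (v k) (v (k + 1)) := by
    refine ⟨?_, ?_, ?_, ?_⟩ <;>
      simp only [hz, detZ, Prod.fst_add, Prod.snd_add, Prod.smul_fst, Prod.smul_snd,
        smul_eq_mul] <;> ring
  have hzj_pos : 0 < detZ z (v (j + 1)) := by
    rw [hzj]
    nlinarith [le_abs_self (detZ (v (j + 1)) (v (k + 1))),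
      mul_le_mul_of_nonneg_left (show 1 ≤ detZ (v k) (v (j + 1)) by omega)
        (show 0 ≤ N by positivity)]
  have hjz_pos : 0 < detZ (v j) z := by
    refine pos_of_mul_pos_left ?_ hpos.le
    rw [hjz]; nlinarith
  exact hjk (hv.eq_of_mem_interior hjz_pos hzj_pos (by omega) (by rw [hzk]; positivity))

end IsCompleteFanData

theorem IsLDPFanData.two_le_detZ_of_neg {d : ℕ} {v : ZMod d → ℤ × ℤ} (hd : 4 ≤ d)
    (h : IsLDPFanData d v) {i : ZMod d} (h1 : 2 ≤ detZ (v (i - 1)) (v i))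
    (h2 : detZ (v i) (v (i + 1)) = 1) (h3 : 2 ≤ detZ (v (i + 1)) (v (i + 2)))
    (hP : detZ (v (i - 1)) (v (i + 1)) < 0) (hS : detZ (v i) (v (i + 2)) < 0) :
    2 ≤ detZ (v (i + 2)) (v (i - 1)) := by
  obtain ⟨hv, hf⟩ := h
  have hne : i + 2 ≠ i - 1 := by
    intro h
    have h3d : ((3 : ℕ) : ZMod d) = 0 := by push_cast; linear_combination h
    rw [ZMod.natCast_eq_zero_iff] at h3d
    exact absurd (Nat.le_of_dvd three_pos h3d) (by omega)
  have hD : 1 ≤ detZ (v (i + 2)) (v (i - 1)) := by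
    by_contra! hD
    have := hv.detZ_nonpos_of_nonneg hne.symm (sub_add_cancel i 1)
      (by rw [← detZ_anticomm]; omega)
    rw [← detZ_anticomm] at this
    omega
  by_contra! hD'
  have hD1 : detZ (v (i + 2)) (v (i - 1)) = 1 := by omega
  have hSP := detZ_plucker (v (i - 1)) (v i) (v (i + 1)) (v (i + 2))
  rw [h2, hD1, mul_one] at hSP
  have hf2 := hf (i + 2)
  rw [fanF_eq v (j := i + 1) (k := i + 2) (l := i + 3) (by ring) (by ring)] at hf2
  by_cases hw : i + 3 = i - 1
  · have hf3 := hf (i - 1)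
    rw [fanF_eq v (j := i + 2) (by linear_combination hw) (sub_add_cancel i 1)] at hf3
    rw [hw, hD1] at hf2
    rw [hD1] at hf3
    obtain ⟨hSQ, hPR⟩ := eq_and_eq_of_sub_one_le_mul (neg_pos.mpr hS) (neg_pos.mpr hP)
      (by omega) (by omega) h1 h3 (by linarith)
    nlinarith
  · have hn := hv.one_le_detZ (j := i + 2) (k := i + 3) (by ring)
    have ha := hv.detZ_nonpos_of_nonneg hne (j' := i + 3) (by ring) (by omega)
    -- As `D = 1`, `v_{i+3} = m e + n a` with `m = det(v_{i+3}, a)`, `n = det(e, v_{i+3})`.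
    have hwc : detZ (v (i + 3)) (v (i + 1)) * detZ (v (i + 2)) (v (i - 1)) =
        detZ (v (i + 3)) (v (i - 1)) * detZ (v (i + 2)) (v (i + 1)) +
          detZ (v (i + 2)) (v (i + 3)) * detZ (v (i - 1)) (v (i + 1)) := by
      unfold detZ; ring
    have hwb : detZ (v (i + 3)) (v i) * detZ (v (i + 2)) (v (i - 1)) =
        detZ (v (i + 3)) (v (i - 1)) * detZ (v (i + 2)) (v i) +
          detZ (v (i + 2)) (v (i + 3)) * detZ (v (i - 1)) (v i) := by
      unfold detZ; ring
    rw [hD1, mul_one] at hwc hwb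
    rw [← detZ_anticomm (v (i + 1)) (v (i + 2))] at hwc
    rw [← detZ_anticomm (v (i + 3))] at ha
    have hm : detZ (v (i + 3)) (v (i - 1)) = 0 := by
      nlinarith [mul_le_mul_of_nonneg_left (show 1 + detZ (v (i - 1)) (v (i + 1)) ≤ 0 by omega)
        (show 0 ≤ detZ (v (i + 2)) (v (i + 3)) by omega)]
    have hb := hv.detZ_nonpos_of_nonneg (Ne.symm hw) (sub_add_cancel i 1)
      (by rw [← detZ_anticomm, hm]; simp)
    rw [hwb, hm, zero_mul, zero_add] at hb
    nlinarith

/-- Lemma 3.1 (1): if in LDP fan data the cones `σ_{i−1}` and `σ_{i+1}` are singular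
while `σ_i` is nonsingular, then `det(v_{i+2}, v_{i−1}) ≥ 2`. -/
theorem singular_nonsingular_singular_det (d : ℕ) (v : ZMod d → ℤ × ℤ)
    (hd : 4 ≤ d) (h : IsLDPFanData d v) (i : ZMod d)
    (h1 : 2 ≤ detZ (v (i - 1)) (v i))
    (h2 : detZ (v i) (v (i + 1)) = 1)
    (h3 : 2 ≤ detZ (v (i + 1)) (v (i + 2))) :
    2 ≤ detZ (v (i + 2)) (v (i - 1)) := by
  have hP : detZ (v (i - 1)) (v (i + 1)) ≤ detZ (v (i - 1)) (v i) := by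
    have := h.2 i
    rw [fanF_eq v (sub_add_cancel i 1) rfl, h2, ← detZ_anticomm (v (i - 1))] at this
    linarith
  have hS : detZ (v i) (v (i + 2)) ≤ detZ (v (i + 1)) (v (i + 2)) := by
    have := h.2 (i + 1)
    rw [fanF_eq v (l := i + 2) rfl (by ring), h2, ← detZ_anticomm (v i)] at this
    linarith
  have hSP := detZ_plucker (v (i - 1)) (v i) (v (i + 1)) (v (i + 2))
  rw [h2, mul_one] at hSP
  by_contra! hD
  rcases pos_and_pos_or_neg_and_neg_of_mul_pos
      (show 0 < detZ (v i) (v (i + 2)) * detZ (v (i - 1)) (v (i + 1)) by nlinarith) with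
    ⟨hS0, hP0⟩ | ⟨hS0, hP0⟩
  · obtain ⟨hSR, -⟩ := eq_and_eq_of_sub_one_le_mul hS0 hP0 hS hP h3 h1 (by linarith)
    have := Int.le_of_dvd one_pos (detZ_dvd_one_of_detZ_eq h2 (h.1.2.1 (i + 2)) hSR)
    omega
  · linarith [h.two_le_detZ_of_neg hd h1 h2 h3 hP0 hS0]
end
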